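/- arXiv:2504.15225 — 2 statements merged into one kernel-verified Lean document; each statement's English description precedes it below -/
import Mathlib

section
/- There exists a universal constant c > 0 such that the following holds. Let μ* be a real number, ρ > 0, σ > 0, and let P* be the two-component Gaussian location mixture P* = (1/2)·N(μ*(1+ρ), σ²) + (1/2)·N(μ*(1−ρ), σ²) on ℝ. Then any μ̄ that minimizes over μ ∈ ℝ the Kullback–Leibler divergence KL(P*, N(μ, σ²)) satisfies |μ* − μ̄| ≤ ρ·|μ*| + c·(ρ·|μ*|/σ)^{1/4}. -/
open MeasureTheory ProbabilityTheory Real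
open scoped ENNReal NNReal Classical

/-- The Kullback–Leibler divergence `KL(P, Q)` between two measures on `ℝ`, valued in `ℝ≥0∞`:
it equals `∫ log (dP/dQ) dP` when `P ≪ Q` and this integral is well-defined, and `∞` otherwise. -/
noncomputable def klDiv (P Q : Measure ℝ) : ℝ≥0∞ :=
  if P ≪ Q ∧ Integrable (fun x => Real.log (P.rnDeriv Q x).toReal) P
  then ENNReal.ofReal (∫ x, Real.log (P.rnDeriv Q x).toReal ∂P)
  else ∞

section Helpers

variable {v : ℝ≥0} (hv : v ≠ 0)

lemma hv_pos (hv : v ≠ 0) : (0:ℝ) < (v:ℝ) := by positivity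

lemma gauss_exp (m x : ℝ) :
    gaussianPDFReal m v x = (√(2 * π * v))⁻¹ * rexp (-(2*(v:ℝ))⁻¹ * (x - m) ^ 2) := by
  rw [gaussianPDFReal]
  congr 1
  rw [neg_div, div_eq_inv_mul, neg_mul]

lemma sqrt_pos' (hv : v ≠ 0) : (0:ℝ) < √(2 * π * v) := by
  have := hv_pos hv
  have := pi_pos
  positivity

lemma gauss_le (hv : v ≠ 0) (m x : ℝ) : gaussianPDFReal m v x ≤ (√(2 * π * v))⁻¹ := by
  rw [gaussianPDFReal]
  have h1 : rexp (-(x - m)^2 / (2 * v)) ≤ 1 := by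
    apply exp_le_one_iff.mpr
    have := hv_pos hv
    apply div_nonpos_of_nonpos_of_nonneg
    · simp [sq_nonneg]
    · positivity
  calc (√(2 * π * v))⁻¹ * rexp (-(x - m)^2 / (2 * v))
      ≤ (√(2 * π * v))⁻¹ * 1 := by
        apply mul_le_mul_of_nonneg_left h1 (by have := sqrt_pos' hv; positivity)
    _ = _ := mul_one _

lemma log_gauss (hv : v ≠ 0) (m x : ℝ) :
    Real.log (gaussianPDFReal m v x) = Real.log (√(2 * π * v))⁻¹ - (x - m)^2 / (2 * v) := by
  rw [gaussianPDFReal, Real.log_mul (by have := sqrt_pos' hv; positivity) (exp_ne_zero _), Real.log_exp,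
    neg_div]
  ring

/-- Transfer integrability to the Gaussian measure. -/
lemma integrable_gauss_iff (hv : v ≠ 0) (m : ℝ) (f : ℝ → ℝ) :
    Integrable f (gaussianReal m v) ↔
      Integrable (fun x => f x * gaussianPDFReal m v x) volume := by
  rw [gaussianReal_of_var_ne_zero m hv,
    integrable_withDensity_iff (measurable_gaussianPDF m v)
      (ae_of_all _ fun x => ENNReal.ofReal_lt_top)]
  simp only [gaussianPDF, ENNReal.toReal_ofReal (gaussianPDFReal_nonneg m v _)]

lemma integral_gauss (hv : v ≠ 0) (m : ℝ) (f : ℝ → ℝ) :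
    ∫ x, f x ∂(gaussianReal m v) = ∫ x, gaussianPDFReal m v x * f x := by
  rw [gaussianReal_of_var_ne_zero m hv]
  have : (gaussianPDF m v) = fun x => ((gaussianPDFReal m v x).toNNReal : ℝ≥0∞) := rfl
  rw [this, integral_withDensity_eq_integral_smul (by
    exact (measurable_gaussianPDFReal m v).real_toNNReal) f]
  congr 1 with x
  simp [NNReal.smul_def, Real.coe_toNNReal _ (gaussianPDFReal_nonneg m v x)]

lemma integrable_sq_gauss (hv : v ≠ 0) (m c : ℝ) :
    Integrable (fun x => (x - c)^2) (gaussianReal m v) := by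
  rw [integrable_gauss_iff hv]
  have hb : (0:ℝ) < (2*(v:ℝ))⁻¹ := by have := hv_pos hv; positivity
  have hshift : Integrable (fun y => ((y + m) - c)^2 * gaussianPDFReal m v (y + m)) volume → 
      Integrable (fun x => (x - c)^2 * gaussianPDFReal m v x) volume := by
    intro h
    have := h.comp_add_right (-m)
    simpa using this
  apply hshift
  have hpdf : ∀ y : ℝ, gaussianPDFReal m v (y + m) 
      = (√(2 * π * v))⁻¹ * rexp (-(2*(v:ℝ))⁻¹ * y ^ 2) := by
    intro y; rw [gauss_exp]; ring_nf
  simp only [hpdf]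
  have h2 : Integrable (fun y : ℝ => y^2 * rexp (-(2*(v:ℝ))⁻¹ * y ^ 2)) volume := by
    have := integrable_rpow_mul_exp_neg_mul_sq hb (s := 2) (by norm_num)
    convert this using 2 with y
    rw [show ((2:ℝ):ℝ) = ((2:ℕ):ℝ) by norm_num, Real.rpow_natCast]
  have h1 : Integrable (fun y : ℝ => y * rexp (-(2*(v:ℝ))⁻¹ * y ^ 2)) volume :=
    integrable_mul_exp_neg_mul_sq hb
  have h0 : Integrable (fun y : ℝ => rexp (-(2*(v:ℝ))⁻¹ * y ^ 2)) volume :=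
    integrable_exp_neg_mul_sq hb
  have : (fun y : ℝ => ((y + m) - c)^2 * ((√(2 * π * v))⁻¹ * rexp (-(2*(v:ℝ))⁻¹ * y ^ 2)))
      = fun y : ℝ => (√(2 * π * v))⁻¹ * (y^2 * rexp (-(2*(v:ℝ))⁻¹ * y ^ 2))
        + (2*(m - c)*(√(2 * π * v))⁻¹) * (y * rexp (-(2*(v:ℝ))⁻¹ * y ^ 2))
        + ((m - c)^2 * (√(2 * π * v))⁻¹) * rexp (-(2*(v:ℝ))⁻¹ * y ^ 2) := by
    funext y; ring
  rw [this]
  exact ((h2.const_mul _).add (h1.const_mul _)).add (h0.const_mul _)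

lemma integrable_id_gauss (hv : v ≠ 0) (m : ℝ) :
    Integrable (fun x => x) (gaussianReal m v) := by
  have h := (integrable_sq_gauss hv m m).add (integrable_const (1 + |m|))
  refine h.mono' measurable_id.aestronglyMeasurable (ae_of_all _ fun x => ?_)
  have h1 : |x - m| ≤ 1 + (x - m)^2 := by
    rcases le_or_gt (|x - m|) 1 with h | h
    · nlinarith [abs_nonneg (x - m)]
    · nlinarith [sq_abs (x - m), abs_nonneg (x - m)]
  have := abs_sub_abs_le_abs_sub x m
  simp only [Real.norm_eq_abs]
  calc |x| ≤ |x - m| + |m| := by have := abs_sub_abs_le_abs_sub x m; linarith [abs_abs_sub_abs_le_abs_sub x m, abs_add_le (x-m) m]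
    _ ≤ (1 + (x - m)^2) + |m| := by linarith
    _ = (x-m)^2 + (1 + |m|) := by ring

lemma integral_id_gauss (hv : v ≠ 0) (m : ℝ) :
    ∫ x, x ∂(gaussianReal m v) = m := by
  rw [integral_gauss hv]
  have hb : (0:ℝ) < (2*(v:ℝ))⁻¹ := by have := hv_pos hv; positivity
  have key : ∫ x, gaussianPDFReal m v x * x 
      = ∫ y, gaussianPDFReal m v (y + m) * (y + m) := by
    rw [integral_add_right_eq_self (fun x => gaussianPDFReal m v x * x) m]
  rw [key]
  have hpdf : ∀ y : ℝ, gaussianPDFReal m v (y + m) 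
      = (√(2 * π * v))⁻¹ * rexp (-(2*(v:ℝ))⁻¹ * y ^ 2) := by
    intro y; rw [gauss_exp]; ring_nf
  simp only [hpdf]
  have h1 : Integrable (fun y : ℝ => y * rexp (-(2*(v:ℝ))⁻¹ * y ^ 2)) volume :=
    integrable_mul_exp_neg_mul_sq hb
  have h0 : Integrable (fun y : ℝ => rexp (-(2*(v:ℝ))⁻¹ * y ^ 2)) volume :=
    integrable_exp_neg_mul_sq hb
  have hodd : ∫ y : ℝ, y * rexp (-(2*(v:ℝ))⁻¹ * y ^ 2) = 0 := by
    set g : ℝ → ℝ := fun y => y * rexp (-(2*(v:ℝ))⁻¹ * y ^ 2) with hg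
    have key : ∫ y, g y = - ∫ y, g y := by
      calc ∫ y, g y = ∫ y, g (-y) := (integral_neg_eq_self g volume).symm
        _ = ∫ y, -(g y) := by
            congr 1; funext y; simp only [hg, neg_sq]; ring
        _ = - ∫ y, g y := integral_neg _
    linarith
  have split : (fun y : ℝ => (√(2 * π * v))⁻¹ * rexp (-(2*(v:ℝ))⁻¹ * y ^ 2) * (y + m))
      = fun y : ℝ => (√(2 * π * v))⁻¹ * (y * rexp (-(2*(v:ℝ))⁻¹ * y ^ 2)) 
        + m * ((√(2 * π * v))⁻¹ * rexp (-(2*(v:ℝ))⁻¹ * y ^ 2)) := by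
    funext y; ring
  rw [split, integral_add ((h1.const_mul _)) ((h0.const_mul _).const_mul m),
    integral_const_mul, integral_const_mul, hodd, mul_zero, zero_add, integral_const_mul]
  have hone : (√(2 * π * (v:ℝ)))⁻¹ * ∫ y : ℝ, rexp (-(2*(v:ℝ))⁻¹ * y ^ 2) = 1 := by
    rw [← integral_const_mul]
    have : ∫ y : ℝ, (√(2 * π * v))⁻¹ * rexp (-(2*(v:ℝ))⁻¹ * y ^ 2) 
        = ∫ y : ℝ, gaussianPDFReal m v (y + m) := by simp only [hpdf]
    rw [this, integral_add_right_eq_self (gaussianPDFReal m v) m,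
      integral_gaussianPDFReal_eq_one m hv]
  rw [hone, mul_one]

end Helpers

noncomputable def mixM (μ1 μ2 : ℝ) (v : ℝ≥0) : Measure ℝ :=
  ((1:ℝ≥0∞)/2) • gaussianReal μ1 v + ((1:ℝ≥0∞)/2) • gaussianReal μ2 v

noncomputable def mixPDF (μ1 μ2 : ℝ) (v : ℝ≥0) (x : ℝ) : ℝ :=
  (gaussianPDFReal μ1 v x + gaussianPDFReal μ2 v x)/2

lemma half_ne_top : ((1:ℝ≥0∞)/2) ≠ ⊤ := by simp
lemma ofReal_half : ENNReal.ofReal (1/2 : ℝ) = (1:ℝ≥0∞)/2 := by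
  rw [ENNReal.ofReal_div_of_pos (by norm_num)]
  simp [ENNReal.ofReal_one, ENNReal.ofReal_ofNat]

instance mixM_prob (μ1 μ2 : ℝ) (v : ℝ≥0) : IsProbabilityMeasure (mixM μ1 μ2 v) := by
  constructor
  simp [mixM, measure_univ]
  rw [ENNReal.inv_two_add_inv_two]

lemma mixM_withDensity (μ1 μ2 : ℝ) {v : ℝ≥0} (hv : v ≠ 0) :
    mixM μ1 μ2 v = volume.withDensity (fun x => ENNReal.ofReal (mixPDF μ1 μ2 v x)) := by
  have hd : (fun x => ENNReal.ofReal (mixPDF μ1 μ2 v x))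
      = (((1:ℝ≥0∞)/2) • gaussianPDF μ1 v) + (((1:ℝ≥0∞)/2) • gaussianPDF μ2 v) := by
    funext x
    simp only [mixPDF, Pi.add_apply, Pi.smul_apply, smul_eq_mul, gaussianPDF]
    rw [show (gaussianPDFReal μ1 v x + gaussianPDFReal μ2 v x)/2
        = (1/2) * gaussianPDFReal μ1 v x + (1/2) * gaussianPDFReal μ2 v x by ring,
      ENNReal.ofReal_add (by have := gaussianPDFReal_nonneg μ1 v x; positivity) (by have := gaussianPDFReal_nonneg μ2 v x; positivity),
      ENNReal.ofReal_mul (by norm_num), ENNReal.ofReal_mul (by norm_num), ofReal_half]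
  rw [hd, withDensity_add_right _ ((measurable_gaussianPDF μ2 v).const_smul _),
    withDensity_smul _ (measurable_gaussianPDF μ1 v),
    withDensity_smul _ (measurable_gaussianPDF μ2 v), mixM,
    gaussianReal_of_var_ne_zero μ1 hv, gaussianReal_of_var_ne_zero μ2 hv]

lemma integrable_mix (μ1 μ2 : ℝ) (v : ℝ≥0) {f : ℝ → ℝ}
    (h1 : Integrable f (gaussianReal μ1 v)) (h2 : Integrable f (gaussianReal μ2 v)) :
    Integrable f (mixM μ1 μ2 v) :=
  (h1.smul_measure half_ne_top).add_measure (h2.smul_measure half_ne_top)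

lemma integral_mix (μ1 μ2 : ℝ) (v : ℝ≥0) {f : ℝ → ℝ}
    (h1 : Integrable f (gaussianReal μ1 v)) (h2 : Integrable f (gaussianReal μ2 v)) :
    ∫ x, f x ∂(mixM μ1 μ2 v)
      = (1/2) * ∫ x, f x ∂(gaussianReal μ1 v) + (1/2) * ∫ x, f x ∂(gaussianReal μ2 v) := by
  rw [mixM, integral_add_measure (h1.smul_measure half_ne_top) (h2.smul_measure half_ne_top),
    integral_smul_measure, integral_smul_measure]
  norm_num

section Mix
variable {v : ℝ≥0} (hv : v ≠ 0) (μ1 μ2 : ℝ)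

lemma integrable_sq_mix (hv : v ≠ 0) (c : ℝ) :
    Integrable (fun x => (x - c)^2) (mixM μ1 μ2 v) :=
  integrable_mix _ _ _ (integrable_sq_gauss hv _ c) (integrable_sq_gauss hv _ c)

lemma integral_id_mix (hv : v ≠ 0) :
    ∫ x, x ∂(mixM μ1 μ2 v) = (μ1 + μ2)/2 := by
  rw [integral_mix _ _ _ (integrable_id_gauss hv μ1) (integrable_id_gauss hv μ2),
    integral_id_gauss hv, integral_id_gauss hv]
  ring

lemma integrable_id_mix (hv : v ≠ 0) :
    Integrable (fun x => x) (mixM μ1 μ2 v) :=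
  integrable_mix _ _ _ (integrable_id_gauss hv μ1) (integrable_id_gauss hv μ2)

lemma integral_sq_mix (hv : v ≠ 0) (μ : ℝ) :
    ∫ x, (x - μ)^2 ∂(mixM μ1 μ2 v)
      = (∫ x, (x - (μ1+μ2)/2)^2 ∂(mixM μ1 μ2 v)) + (μ - (μ1+μ2)/2)^2 := by
  set s : ℝ := (μ1+μ2)/2 with hs
  have hexp : (fun x : ℝ => (x - μ)^2)
      = fun x => (x - s)^2 + ((2*(s-μ)) * x + (μ^2 - s^2)) := by
    funext x; ring
  have hint1 : Integrable (fun x => (x - s)^2) (mixM μ1 μ2 v) := integrable_sq_mix _ _ hv s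
  have hint2 : Integrable (fun x => (2*(s-μ)) * x + (μ^2 - s^2)) (mixM μ1 μ2 v) :=
    ((integrable_id_mix _ _ hv).const_mul _).add (integrable_const _)
  rw [hexp, integral_add hint1 hint2, integral_add ((integrable_id_mix _ _ hv).const_mul _)
    (integrable_const _), integral_const_mul, integral_id_mix _ _ hv, ← hs, integral_const]
  simp only [measure_univ, probReal_univ, ENNReal.toReal_one, smul_eq_mul, one_mul]
  ring
end Mix

section Gfun
variable {v : ℝ≥0} (μ1 μ2 : ℝ)

noncomputable def gfun (μ1 μ2 : ℝ) (v : ℝ≥0) (μ : ℝ) (x : ℝ) : ℝ :=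
  Real.log (mixPDF μ1 μ2 v x) - Real.log (gaussianPDFReal μ v x)

lemma mixPDF_pos (hv : v ≠ 0) (x : ℝ) : 0 < mixPDF μ1 μ2 v x := by
  have h1 := gaussianPDFReal_pos μ1 v x hv
  have h2 := gaussianPDFReal_pos μ2 v x hv
  rw [mixPDF]; positivity

lemma mixPDF_le (hv : v ≠ 0) (x : ℝ) : mixPDF μ1 μ2 v x ≤ (√(2 * π * v))⁻¹ := by
  have h1 := gauss_le hv μ1 x
  have h2 := gauss_le hv μ2 x
  rw [mixPDF]; linarith

lemma measurable_mixPDF : Measurable (mixPDF μ1 μ2 v) :=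
  ((measurable_gaussianPDFReal μ1 v).add (measurable_gaussianPDFReal μ2 v)).div_const 2

lemma measurable_gfun (μ : ℝ) : Measurable (gfun μ1 μ2 v μ) :=
  (Real.measurable_log.comp (measurable_mixPDF μ1 μ2)).sub
    (Real.measurable_log.comp (measurable_gaussianPDFReal μ v))

lemma gfun_eq (hv : v ≠ 0) (μ : ℝ) : gfun μ1 μ2 v μ
    = fun x => (Real.log (mixPDF μ1 μ2 v x) - Real.log (√(2 * π * v))⁻¹) + (x - μ)^2/(2*v) := by
  funext x
  rw [gfun, log_gauss hv]
  ring

lemma logmix_le (hv : v ≠ 0) (x : ℝ) :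
    Real.log (mixPDF μ1 μ2 v x) - Real.log (√(2 * π * v))⁻¹ ≤ 0 := by
  have := Real.log_le_log (mixPDF_pos μ1 μ2 hv x) (mixPDF_le μ1 μ2 hv x)
  linarith

lemma logmix_ge (hv : v ≠ 0) (x : ℝ) :
    -(Real.log 2 + (x - μ1)^2/(2*v))
      ≤ Real.log (mixPDF μ1 μ2 v x) - Real.log (√(2 * π * v))⁻¹ := by
  have hφ := gaussianPDFReal_pos μ1 v x hv
  have hle : gaussianPDFReal μ1 v x / 2 ≤ mixPDF μ1 μ2 v x := by
    have := gaussianPDFReal_nonneg μ2 v x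
    rw [mixPDF]; linarith
  have h1 : Real.log (gaussianPDFReal μ1 v x / 2) ≤ Real.log (mixPDF μ1 μ2 v x) :=
    Real.log_le_log (by positivity) hle
  rw [Real.log_div (ne_of_gt hφ) (by norm_num), log_gauss hv] at h1
  linarith

lemma integrable_logmix (hv : v ≠ 0) :
    Integrable (fun x => Real.log (mixPDF μ1 μ2 v x) - Real.log (√(2 * π * v))⁻¹)
      (mixM μ1 μ2 v) := by
  have hbound : Integrable (fun x => Real.log 2 + (x - μ1)^2/(2*(v:ℝ))) (mixM μ1 μ2 v) :=
    (integrable_const _).add ((integrable_sq_mix μ1 μ2 hv μ1).div_const _)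
  refine hbound.mono' ((Real.measurable_log.comp (measurable_mixPDF μ1 μ2)).sub
    measurable_const).aestronglyMeasurable (ae_of_all _ fun x => ?_)
  have h1 := logmix_le μ1 μ2 hv x
  have h2 := logmix_ge μ1 μ2 hv x
  have hv' := hv_pos hv
  rw [Real.norm_eq_abs, abs_le]
  constructor
  · linarith
  · have : (0:ℝ) ≤ (x - μ1)^2/(2*(v:ℝ)) := by positivity
    have hl2 : (0:ℝ) ≤ Real.log 2 := Real.log_nonneg (by norm_num)
    linarith

lemma integrable_gfun (hv : v ≠ 0) (μ : ℝ) :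
    Integrable (gfun μ1 μ2 v μ) (mixM μ1 μ2 v) := by
  rw [gfun_eq μ1 μ2 hv]
  exact (integrable_logmix μ1 μ2 hv).add ((integrable_sq_mix μ1 μ2 hv μ).div_const _)

lemma integral_gfun (hv : v ≠ 0) (μ : ℝ) :
    ∫ x, gfun μ1 μ2 v μ x ∂(mixM μ1 μ2 v)
      = (∫ x, gfun μ1 μ2 v ((μ1+μ2)/2) x ∂(mixM μ1 μ2 v)) + (μ - (μ1+μ2)/2)^2/(2*v) := by
  have key : ∀ μ' : ℝ, ∫ x, gfun μ1 μ2 v μ' x ∂(mixM μ1 μ2 v)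
      = (∫ x, Real.log (mixPDF μ1 μ2 v x) - Real.log (√(2 * π * v))⁻¹ ∂(mixM μ1 μ2 v))
        + (∫ x, (x - μ')^2 ∂(mixM μ1 μ2 v))/(2*v) := by
    intro μ'
    rw [gfun_eq μ1 μ2 hv]
    rw [integral_add (integrable_logmix μ1 μ2 hv) ((integrable_sq_mix μ1 μ2 hv μ').div_const _),
      integral_div]
  rw [key μ, key ((μ1+μ2)/2), integral_sq_mix μ1 μ2 hv μ, add_div, add_assoc]

end Gfun

section Bridge
variable {v : ℝ≥0} (μ1 μ2 : ℝ)

lemma mix_ac (hv : v ≠ 0) (μ : ℝ) : mixM μ1 μ2 v ≪ gaussianReal μ v := by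
  rw [mixM_withDensity μ1 μ2 hv]
  exact (withDensity_absolutelyContinuous _ _).trans (gaussianReal_absolutelyContinuous' μ hv)

lemma ac_mix (hv : v ≠ 0) (μ : ℝ) : gaussianReal μ v ≪ mixM μ1 μ2 v := by
  refine (gaussianReal_absolutelyContinuous μ hv).trans ?_
  rw [mixM_withDensity μ1 μ2 hv]
  refine withDensity_absolutelyContinuous' 
    ((measurable_mixPDF μ1 μ2).ennreal_ofReal).aemeasurable (ae_of_all _ fun x => ?_)
  exact ne_of_gt (ENNReal.ofReal_pos.mpr (mixPDF_pos μ1 μ2 hv x))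

lemma rnDeriv_mix (hv : v ≠ 0) (μ : ℝ) :
    (mixM μ1 μ2 v).rnDeriv (gaussianReal μ v) =ᵐ[gaussianReal μ v]
      fun x => ENNReal.ofReal (mixPDF μ1 μ2 v x) / gaussianPDF μ v x := by
  have hmeas : Measurable (fun x => ENNReal.ofReal (mixPDF μ1 μ2 v x) / gaussianPDF μ v x) :=
    ((measurable_mixPDF μ1 μ2).ennreal_ofReal).div (measurable_gaussianPDF μ v)
  have hP : mixM μ1 μ2 v = (gaussianReal μ v).withDensity
      (fun x => ENNReal.ofReal (mixPDF μ1 μ2 v x) / gaussianPDF μ v x) := by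
    rw [gaussianReal_of_var_ne_zero μ hv, ← withDensity_mul _ (measurable_gaussianPDF μ v) hmeas,
      mixM_withDensity μ1 μ2 hv]
    congr 1
    funext x
    exact (ENNReal.mul_div_cancel
      (ne_of_gt (gaussianPDF_pos μ hv x)) ENNReal.ofReal_ne_top).symm
  rw [hP]
  exact Measure.rnDeriv_withDensity _ hmeas

lemma llr_ae (hv : v ≠ 0) (μ : ℝ) :
    (fun x => Real.log (((mixM μ1 μ2 v).rnDeriv (gaussianReal μ v)) x).toReal)
      =ᵐ[mixM μ1 μ2 v] gfun μ1 μ2 v μ := by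
  filter_upwards [(mix_ac μ1 μ2 hv μ).ae_eq (rnDeriv_mix μ1 μ2 hv μ)] with x hx
  rw [hx, gaussianPDF, ENNReal.toReal_div,
    ENNReal.toReal_ofReal (mixPDF_pos μ1 μ2 hv x).le,
    ENNReal.toReal_ofReal (gaussianPDFReal_nonneg μ v x),
    Real.log_div (ne_of_gt (mixPDF_pos μ1 μ2 hv x))
      (ne_of_gt (gaussianPDFReal_pos μ v x hv))]
  rfl

lemma gibbs {P Q : Measure ℝ} [IsProbabilityMeasure P] [IsProbabilityMeasure Q]
    (hPQ : P ≪ Q) (hQP : Q ≪ P)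
    (hint : Integrable (fun x => Real.log ((P.rnDeriv Q) x).toReal) P) :
    0 ≤ ∫ x, Real.log ((P.rnDeriv Q) x).toReal ∂P := by
  have hpos : ∀ᵐ x ∂P, 0 < (Q.rnDeriv P) x := hPQ.ae_le (Measure.rnDeriv_pos hQP)
  have hfin : ∀ᵐ x ∂P, (Q.rnDeriv P) x < ∞ := Measure.rnDeriv_lt_top Q P
  have hae : (fun x => Real.log ((P.rnDeriv Q) x).toReal)
      =ᵐ[P] fun x => - Real.log ((Q.rnDeriv P) x).toReal := by
    filter_upwards [hPQ.ae_eq (Measure.inv_rnDeriv hQP)] with x h1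
    rw [← h1, Pi.inv_apply, ENNReal.toReal_inv, Real.log_inv]
  rw [integral_congr_ae hae, integral_neg]
  have hflog : Integrable (fun x => Real.log ((Q.rnDeriv P) x).toReal) P := by
    have h2 : Integrable (fun x => - Real.log ((Q.rnDeriv P) x).toReal) P := hint.congr hae
    have := h2.neg
    convert this using 1
    funext x
    simp
  have hf : Integrable (fun x => ((Q.rnDeriv P) x).toReal) P :=
    Measure.integrable_toReal_rnDeriv
  have hle : ∫ x, Real.log ((Q.rnDeriv P) x).toReal ∂P
      ≤ ∫ x, (((Q.rnDeriv P) x).toReal - 1) ∂P := by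
    refine integral_mono_ae hflog (hf.sub (integrable_const 1)) ?_
    filter_upwards [hpos, hfin] with x hx hx'
    exact Real.log_le_sub_one_of_pos (ENNReal.toReal_pos (ne_of_gt hx) (ne_of_lt hx'))
  rw [integral_sub hf (integrable_const 1), Measure.integral_toReal_rnDeriv hQP,
    integral_const] at hle
  simp only [measure_univ, probReal_univ, ENNReal.toReal_one, smul_eq_mul, mul_one, sub_self] at hle
  linarith

end Bridge


section KL
variable {v : ℝ≥0} (μ1 μ2 : ℝ)

lemma integrable_llr_mix (hv : v ≠ 0) (μ : ℝ) :
    Integrable (fun x => Real.log (((mixM μ1 μ2 v).rnDeriv (gaussianReal μ v)) x).toReal)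
      (mixM μ1 μ2 v) :=
  (integrable_gfun μ1 μ2 hv μ).congr (llr_ae μ1 μ2 hv μ).symm

lemma klDiv_mix (hv : v ≠ 0) (μ : ℝ) :
    klDiv (mixM μ1 μ2 v) (gaussianReal μ v)
      = ENNReal.ofReal (∫ x, gfun μ1 μ2 v μ x ∂(mixM μ1 μ2 v)) := by
  rw [klDiv, if_pos ⟨mix_ac μ1 μ2 hv μ, integrable_llr_mix μ1 μ2 hv μ⟩,
    integral_congr_ae (llr_ae μ1 μ2 hv μ)]

lemma gibbs_mix (hv : v ≠ 0) (μ : ℝ) :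
    0 ≤ ∫ x, gfun μ1 μ2 v μ x ∂(mixM μ1 μ2 v) := by
  rw [← integral_congr_ae (llr_ae μ1 μ2 hv μ)]
  exact gibbs (mix_ac μ1 μ2 hv μ) (ac_mix μ1 μ2 hv μ) (integrable_llr_mix μ1 μ2 hv μ)

end KL

/-- **Proposition 1.** There is a universal constant `c > 0` such that for any `μ* ∈ ℝ`,
`ρ > 0`, `σ > 0`, if `P* = (1/2)·N(μ*(1+ρ), σ²) + (1/2)·N(μ*(1−ρ), σ²)`, then any `μ̄`
minimizing `μ ↦ KL(P*, N(μ, σ²))` satisfies `|μ* − μ̄| ≤ ρ|μ*| + c (ρ|μ*|/σ)^(1/4)`. -/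
theorem bias_of_misspecified_gaussian_fit :
    ∃ c : ℝ, 0 < c ∧
      ∀ (μstar ρ σ : ℝ), 0 < ρ → 0 < σ →
        ∀ μbar : ℝ,
          (∀ μ : ℝ,
            klDiv
              (((1 : ℝ≥0∞) / 2) • gaussianReal (μstar * (1 + ρ)) ⟨σ ^ 2, sq_nonneg σ⟩ +
                ((1 : ℝ≥0∞) / 2) • gaussianReal (μstar * (1 - ρ)) ⟨σ ^ 2, sq_nonneg σ⟩)
              (gaussianReal μbar ⟨σ ^ 2, sq_nonneg σ⟩) ≤
            klDiv
              (((1 : ℝ≥0∞) / 2) • gaussianReal (μstar * (1 + ρ)) ⟨σ ^ 2, sq_nonneg σ⟩ +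
                ((1 : ℝ≥0∞) / 2) • gaussianReal (μstar * (1 - ρ)) ⟨σ ^ 2, sq_nonneg σ⟩)
              (gaussianReal μ ⟨σ ^ 2, sq_nonneg σ⟩)) →
          |μstar - μbar| ≤ ρ * |μstar| + c * (ρ * |μstar| / σ) ^ ((1 : ℝ) / 4) := by
  refine ⟨1, one_pos, ?_⟩
  intro μstar ρ σ hρ hσ μbar hmin
  have hv : (⟨σ ^ 2, sq_nonneg σ⟩ : ℝ≥0) ≠ 0 := by
    intro h
    have h2 : ((⟨σ ^ 2, sq_nonneg σ⟩ : ℝ≥0) : ℝ) = σ ^ 2 := rfl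
    rw [h] at h2
    simp at h2
    nlinarith
  set v : ℝ≥0 := ⟨σ ^ 2, sq_nonneg σ⟩
  set μ1 : ℝ := μstar * (1 + ρ) with hμ1
  set μ2 : ℝ := μstar * (1 - ρ) with hμ2
  have hs : (μ1 + μ2)/2 = μstar := by rw [hμ1, hμ2]; ring
  have key : klDiv (mixM μ1 μ2 v) (gaussianReal μbar v)
      ≤ klDiv (mixM μ1 μ2 v) (gaussianReal μstar v) := hmin μstar
  rw [klDiv_mix μ1 μ2 hv μbar, klDiv_mix μ1 μ2 hv μstar] at key
  have h0 : 0 ≤ ∫ x, gfun μ1 μ2 v μstar x ∂(mixM μ1 μ2 v) := gibbs_mix μ1 μ2 hv μstar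
  have hIb : ∫ x, gfun μ1 μ2 v μbar x ∂(mixM μ1 μ2 v)
      = (∫ x, gfun μ1 μ2 v μstar x ∂(mixM μ1 μ2 v)) + (μbar - μstar)^2/(2*(v:ℝ)) := by
    rw [integral_gfun μ1 μ2 hv μbar, integral_gfun μ1 μ2 hv μstar, hs]
    simp
  have hle := (ENNReal.ofReal_le_ofReal_iff h0).mp key
  rw [hIb] at hle
  have hv' : (0:ℝ) < (v:ℝ) := hv_pos hv
  have hsq : (μbar - μstar)^2 ≤ 0 := by
    have hd : (μbar - μstar)^2/(2*(v:ℝ)) ≤ 0 := by linarith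
    by_contra h
    push_neg at h
    have : 0 < (μbar - μstar)^2/(2*(v:ℝ)) := by positivity
    linarith
  have heq : μbar = μstar := by nlinarith [sq_nonneg (μbar - μstar)]
  rw [heq, sub_self, abs_zero, one_mul]
  have h1 : 0 ≤ ρ * |μstar| := by positivity
  have h2 : 0 ≤ (ρ * |μstar| / σ) ^ ((1:ℝ)/4) := Real.rpow_nonneg (by positivity) _
  linarith
end

section
/- Let α > 0 and θ > 0, and let G denote the Gamma distribution with shape α and scale θ. Then as s → ∞, the ratio of the upper tail probability G((s, ∞)) to s^{α−1} e^{−s/θ} / (Γ(α) θ^{α−1}) tends to 1; equivalently, the survival function of G is asymptotically equivalent to θ times its density. -/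
open MeasureTheory ProbabilityTheory Real Filter
open scoped ENNReal Topology

/-- **Gamma tail asymptotics.** For the Gamma distribution with shape `α > 0` and scale
`θ > 0` (rate `1/θ`), the survival function `G((s, ∞))` is asymptotically equivalent to
`s^(α−1) e^(−s/θ) / (Γ(α) θ^(α−1))` as `s → ∞`, i.e. to `θ` times the density. -/
theorem gamma_tail_asymptotic (α θ : ℝ) (hα : 0 < α) (hθ : 0 < θ) :
    Tendsto
      (fun s : ℝ =>
        (gammaMeasure α (1 / θ) (Set.Ioi s)).toReal /
          (s ^ (α - 1) * Real.exp (-s / θ) / (Real.Gamma α * θ ^ (α - 1))))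
      atTop (nhds 1) := by
  have hr : (0 : ℝ) < 1 / θ := by positivity
  have hΓ : 0 < Real.Gamma α := Real.Gamma_pos_of_pos hα
  have hT : (0 : ℝ) < θ ^ (α - 1) := Real.rpow_pos_of_pos hθ _
  set μ := gammaMeasure α (1 / θ) with hμ
  have : IsProbabilityMeasure μ := isProbabilityMeasure_gammaMeasure hα hr
  set pdf : ℝ → ℝ := gammaPDFReal α (1 / θ) with hpdf
  set f : ℝ → ℝ := fun s => (μ (Set.Ioi s)).toReal with hf
  set g : ℝ → ℝ := fun s =>
    s ^ (α - 1) * Real.exp (-s / θ) / (Real.Gamma α * θ ^ (α - 1)) with hg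
  -- integrability of the pdf
  have hint : Integrable pdf := by
    refine ⟨(measurable_gammaPDFReal α (1 / θ)).aestronglyMeasurable, ?_⟩
    rw [hasFiniteIntegral_iff_ofReal (ae_of_all _ (gammaPDFReal_nonneg hα hr))]
    have h1 : ∫⁻ x, ENNReal.ofReal (pdf x) = 1 := lintegral_gammaPDF_eq_one hα hr
    simp only [hpdf, one_div] at h1 ⊢
    rw [h1]
    exact ENNReal.one_lt_top
  -- key identity for s ≥ 1
  have key : ∀ s : ℝ, 1 ≤ s → f s = f 1 - ∫ t in (1:ℝ)..s, pdf t := by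
    intro s hs
    have hdisj : Disjoint (Set.Ioc 1 s) (Set.Ioi s) := by
      rw [Set.disjoint_left]
      rintro x ⟨_, hx2⟩ hx3
      exact absurd hx3 (not_lt.mpr hx2)
    have hadd : μ (Set.Ioc 1 s) + μ (Set.Ioi s) = μ (Set.Ioi 1) := by
      rw [← measure_union hdisj measurableSet_Ioi, Set.Ioc_union_Ioi_eq_Ioi hs]
    have h1 : (μ (Set.Ioc 1 s)).toReal + (μ (Set.Ioi s)).toReal = (μ (Set.Ioi 1)).toReal := by
      rw [← ENNReal.toReal_add (measure_ne_top _ _) (measure_ne_top _ _), hadd]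
    have h2 : (μ (Set.Ioc 1 s)).toReal = ∫ t in (1:ℝ)..s, pdf t := by
      rw [intervalIntegral.integral_of_le hs, hμ, gammaMeasure,
        withDensity_apply _ measurableSet_Ioc,
        integral_eq_lintegral_of_nonneg_ae
          (ae_of_all _ fun x => gammaPDFReal_nonneg hα hr x)
          (measurable_gammaPDFReal α (1 / θ)).aestronglyMeasurable.restrict]
      rfl
    simp only [hf]
    rw [← h2]
    linarith
  -- derivative of f
  have hcont : ∀ s : ℝ, 0 < s → ContinuousAt pdf s := by
    intro s hs
    have hev : ∀ᶠ x in 𝓝 s, ((1/θ) ^ α / Real.Gamma α * x ^ (α - 1) *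
        Real.exp (-(1/θ * x))) = pdf x := by
      filter_upwards [isOpen_Ioi.eventually_mem hs] with x hx
      simp [hpdf, gammaPDFReal, le_of_lt (Set.mem_Ioi.mp hx)]
    refine ContinuousAt.congr ?_ hev
    exact (continuousAt_const.mul (Real.continuousAt_rpow_const s (α - 1)
      (Or.inl (ne_of_gt hs)))).mul (Real.continuous_exp.continuousAt.comp
      ((continuousAt_const.mul continuousAt_id).neg))
  have hf' : ∀ᶠ s in atTop, HasDerivAt f (-(pdf s)) s := by
    filter_upwards [eventually_gt_atTop 1] with s hs
    have h1 : HasDerivAt (fun u => f 1 - ∫ t in (1:ℝ)..u, pdf t) (-(pdf s)) s := by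
      exact ((intervalIntegral.integral_hasDerivAt_right
        hint.intervalIntegrable
        ((measurable_gammaPDFReal α (1/θ)).stronglyMeasurable.stronglyMeasurableAtFilter)
        (hcont s (by linarith))).const_sub (f 1))
    refine h1.congr_of_eventuallyEq ?_
    filter_upwards [isOpen_Ioi.eventually_mem hs] with x hx
    exact key x (le_of_lt (Set.mem_Ioi.mp hx))
  -- derivative of g
  set g' : ℝ → ℝ := fun s =>
    ((α - 1) * s ^ (α - 1 - 1) * Real.exp (-s / θ)
      + s ^ (α - 1) * (Real.exp (-s / θ) * (-(1/θ)))) / (Real.Gamma α * θ ^ (α - 1)) with hg'def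
  have hg' : ∀ᶠ s in atTop, HasDerivAt g (g' s) s := by
    filter_upwards [eventually_gt_atTop 0] with s hs
    have h1 : HasDerivAt (fun x : ℝ => x ^ (α - 1)) ((α - 1) * s ^ (α - 1 - 1)) s :=
      Real.hasDerivAt_rpow_const (Or.inl (ne_of_gt hs))
    have h2 : HasDerivAt (fun x : ℝ => Real.exp (-x / θ)) (Real.exp (-s / θ) * (-(1/θ))) s := by
      have hu : HasDerivAt (fun x : ℝ => -x / θ) (-(1/θ)) s := by
        simpa [neg_div] using ((hasDerivAt_id s).neg.div_const θ)
      simpa using hu.exp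
    exact (h1.mul h2).div_const _
  -- eventual formula for the quotient of derivatives
  have hquot : ∀ᶠ s in atTop, (-(pdf s)) / g' s = (1/θ) / (1/θ - (α - 1)/s) := by
    filter_upwards [eventually_gt_atTop (max 1 (θ * (α - 1)))] with s hs
    have hs1 : (1:ℝ) < s := lt_of_le_of_lt (le_max_left _ _) hs
    have hs0 : (0:ℝ) < s := by linarith
    have hD : 0 < 1/θ - (α - 1)/s := by
      have h1 : (α - 1)/s < 1/θ := by
        rw [div_lt_div_iff₀ hs0 hθ]
        have := lt_of_le_of_lt (le_max_right 1 (θ * (α - 1))) hs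
        nlinarith
      linarith
    have hE : (0:ℝ) < Real.exp (-s / θ) := Real.exp_pos _
    have hA : (0:ℝ) < s ^ (α - 1) := Real.rpow_pos_of_pos hs0 _
    have hsub : s ^ (α - 1 - 1) = s ^ (α - 1) / s := Real.rpow_sub_one (ne_of_gt hs0) _
    have hmul : θ ^ (α - 1) * θ = θ ^ α := by
      have h := (Real.rpow_add hθ (α - 1) 1).symm
      rw [Real.rpow_one] at h
      rw [h]
      norm_num
    have hθα : (1/θ) ^ α = 1 / (θ ^ (α - 1) * θ) := by
      rw [hmul, one_div θ, Real.inv_rpow hθ.le, one_div]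
    have hpdfval : pdf s = (1/θ) ^ α / Real.Gamma α * s ^ (α - 1) * Real.exp (-(1/θ * s)) := by
      simp [hpdf, gammaPDFReal, hs0.le]
    have hexp : Real.exp (-(1/θ * s)) = Real.exp (-s / θ) := by
      congr 1; field_simp
    set A := s ^ (α - 1) with hAdef
    set E := Real.exp (-s / θ) with hEdef
    have hg'val : g' s = -(A * E / (Real.Gamma α * θ ^ (α - 1))
        * (1/θ - (α - 1)/s)) := by
      simp only [hg'def, hsub, ← hAdef, ← hEdef]
      field_simp
      ring
    rw [hpdfval, hexp, hg'val, hθα]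
    set D := (1/θ - (α - 1)/s) with hDdef
    rw [neg_div_neg_eq]
    rw [div_eq_div_iff (by positivity) (ne_of_gt hD)]
    field_simp
  -- limit of the simplified quotient
  have hlim : Tendsto (fun s : ℝ => (1/θ) / (1/θ - (α - 1)/s)) atTop (𝓝 1) := by
    have h1 : Tendsto (fun s : ℝ => (α - 1)/s) atTop (𝓝 0) :=
      tendsto_const_nhds.div_atTop tendsto_id
    have h2 : Tendsto (fun s : ℝ => 1/θ - (α - 1)/s) atTop (𝓝 (1/θ)) := by
      simpa using tendsto_const_nhds.sub h1
    have h3 := (tendsto_const_nhds (x := 1/θ) (f := atTop)).div h2 (by positivity)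
    have h4 : (1/θ : ℝ) / (1/θ) = 1 := div_self (ne_of_gt hr)
    rw [h4] at h3
    exact h3
  have hdiv : Tendsto (fun s => (-(pdf s)) / g' s) atTop (𝓝 1) :=
    Tendsto.congr' (hquot.mono fun s hs => hs.symm) hlim
  -- g' ≠ 0 eventually
  have hg'ne : ∀ᶠ s in atTop, g' s ≠ 0 := by
    filter_upwards [hquot, eventually_gt_atTop (max 1 (θ * (α - 1)))] with s hq hs
    have hs1 : (1:ℝ) < s := lt_of_le_of_lt (le_max_left _ _) hs
    have hs0 : (0:ℝ) < s := by linarith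
    have hD : 0 < 1/θ - (α - 1)/s := by
      have h1 : (α - 1)/s < 1/θ := by
        rw [div_lt_div_iff₀ hs0 hθ]
        have := lt_of_le_of_lt (le_max_right 1 (θ * (α - 1))) hs
        nlinarith
      linarith
    have hsub : s ^ (α - 1 - 1) = s ^ (α - 1) / s := Real.rpow_sub_one (ne_of_gt hs0) _
    have hA : (0:ℝ) < s ^ (α - 1) := Real.rpow_pos_of_pos hs0 _
    have hE : (0:ℝ) < Real.exp (-s / θ) := Real.exp_pos _
    set A := s ^ (α - 1) with hAdef
    set E := Real.exp (-s / θ) with hEdef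
    have hg'val : g' s = -(A * E / (Real.Gamma α * θ ^ (α - 1))
        * (1/θ - (α - 1)/s)) := by
      simp only [hg'def, hsub, ← hAdef, ← hEdef]
      field_simp
      ring
    rw [hg'val]
    have hpos : 0 < A * E / (Real.Gamma α * θ ^ (α - 1)) * (1/θ - (α - 1)/s) :=
      mul_pos (div_pos (mul_pos hA hE) (mul_pos hΓ hT)) hD
    exact neg_ne_zero.mpr (ne_of_gt hpos)
  -- f and g tend to 0
  have hftop : Tendsto f atTop (𝓝 0) := by
    have hfe : ∀ s, f s = 1 - cdf μ s := by
      intro s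
      rw [cdf_eq_real, measureReal_def, hf]
      simp only
      rw [← Set.compl_Iic, prob_compl_eq_one_sub measurableSet_Iic,
        ENNReal.toReal_sub_of_le prob_le_one ENNReal.one_ne_top, ENNReal.toReal_one]
    have : Tendsto (fun s => 1 - cdf μ s) atTop (𝓝 0) := by
      have := tendsto_cdf_atTop μ
      have h := tendsto_const_nhds (x := (1:ℝ)) (f := atTop) |>.sub this
      simpa using h
    exact Tendsto.congr (fun s => (hfe s).symm) this
  have hgtop : Tendsto g atTop (𝓝 0) := by
    have h := tendsto_rpow_mul_exp_neg_mul_atTop_nhds_zero (α - 1) (1/θ) hr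
    have h2 : Tendsto (fun s : ℝ => s ^ (α - 1) * Real.exp (-s / θ)) atTop (𝓝 0) := by
      refine h.congr fun s => ?_
      congr 1
      congr 1
      field_simp
    have := h2.div_const (Real.Gamma α * θ ^ (α - 1))
    simpa [hg] using this
  exact HasDerivAt.lhopital_zero_atTop hf' hg' hg'ne hftop hgtop hdiv
end
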